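/- Let $X$ be a Banach space, $A_0$ a bounded linear operator with $\|e^{tA_0}\| \le 1$ for $t \ge 0$, $u: [0,T] \to X$ twice continuously differentiable with $u' = A_0 u + f(t, u(t))$ for a continuous $f$ that is Lipschitz in its second argument, and suppose the one-step map satisfies $\Psi_k(v) = $ solution at time $k$ of $w' = f(t_n + s, w)$, $w(0) = v$, up to error $O(k^{p+1})$ with $p \ge 1$. Define $\bar{v}_n(k) = u(t_n) + kA_0u(t_n) + k^2\varphi_2(kA_0)A_0^2u(t_n)$ and $\bar{u}_{n+1} = \Psi_k(\bar{v}_n(k))$. Then the Lie-Trotter local error satisfies $\|\bar{u}_{n+1} - u(t_{n+1})\| \le Ck^2$ for a constant $C$ independent of $k$ (for $k$ small). -/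

import Mathlib

/-!
The argument `v̄ₙ(k)` of `Ψ_k` equals `exp (k A₀) u(tₙ)` (the `φ₂` identity), so up to the
`O(k^{p+1})` error of `Ψ_k` the scheme is the exact Lie splitting: the flow `w` of
`w' = f(tₙ + s, w)` started at `exp (k A₀) u(tₙ)`. As `‖exp (t A₀) x - x‖ ≤ t ‖A₀ x‖`, Grönwall
gives `‖w s - u(tₙ + s)‖ = O(k)` on `[0, k]`. The function `s ↦ w s - exp ((k - s) A₀) u(tₙ + s)`
vanishes at `0`, equals `w k - u(tₙ + k)` at `k`, and has derivative
`f(tₙ + s, w s) - exp ((k - s) A₀) f(tₙ + s, u(tₙ + s)) = O(k)`, so the mean value inequality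
gives `O(k²)`.
-/

open NormedSpace intervalIntegral Finset

open Set Metric
open scoped NNReal

section

variable {X : Type*} [NormedAddCommGroup X] [NormedSpace ℝ X] [CompleteSpace X]

theorem hasDerivAt_exp_sub_smul_apply (A : X →L[ℝ] X) (c : ℝ) {y : ℝ → X} {y' : X} {s : ℝ}
    (hy : HasDerivAt y y' s) :
    HasDerivAt (fun s => exp ((c - s) • A) (y s)) (exp ((c - s) • A) (y' - A (y s))) s := by
  have h := (hasDerivAt_exp_smul_const (𝕂 := ℝ) A (c - s)).scomp s
    ((hasDerivAt_id s).const_sub c)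
  refine (h.clm_apply hy).congr_deriv ?_
  simp only [neg_smul, one_smul, neg_apply,
    mul_apply_eq_comp, Function.comp_apply, map_sub]
  abel

theorem norm_exp_smul_apply_sub_le {A : X →L[ℝ] X} (hA : ∀ t : ℝ, 0 ≤ t → ‖exp (t • A)‖ ≤ 1)
    (x : X) {t : ℝ} (ht : 0 ≤ t) : ‖exp (t • A) x - x‖ ≤ t * ‖A x‖ := by
  have hderiv : ∀ s ∈ Icc 0 t, HasDerivWithinAt (fun s => exp ((t - s) • A) x)
      (exp ((t - s) • A) (0 - A x)) (Icc 0 t) s := fun s _ =>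
    (hasDerivAt_exp_sub_smul_apply A t (hasDerivAt_const s x)).hasDerivWithinAt
  have hbound : ∀ s ∈ Ico 0 t, ‖exp ((t - s) • A) (0 - A x)‖ ≤ ‖A x‖ := fun s hs =>
    calc ‖exp ((t - s) • A) (0 - A x)‖ ≤ ‖exp ((t - s) • A)‖ * ‖A x‖ := by
          simpa using (exp ((t - s) • A)).le_opNorm (A x)
      _ ≤ 1 * ‖A x‖ := by gcongr; exact hA _ (by linarith [hs.2])
      _ = ‖A x‖ := one_mul _
  simpa [norm_sub_rev, mul_comm] using
    norm_image_sub_le_of_norm_deriv_le_segment' hderiv hbound t (right_mem_Icc.2 ht)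

theorem continuous_exp_smul (A : X →L[ℝ] X) : Continuous fun t : ℝ => exp (t • A) :=
  continuous_iff_continuousAt.2 fun t => (hasDerivAt_exp_smul_const (𝕂 := ℝ) A t).continuousAt

theorem intervalIntegral_smul_exp_apply_sq (A : X →L[ℝ] X) (x : X) (k : ℝ) :
    (∫ τ in (0:ℝ)..k, τ • exp ((k - τ) • A)) (A (A x)) = exp (k • A) x - x - k • A x := by
  have hcont : Continuous fun τ : ℝ => τ • exp ((k - τ) • A) :=
    continuous_id.smul ((continuous_exp_smul A).comp (continuous_const.sub continuous_id))
  rw [ContinuousLinearMap.intervalIntegral_apply (hcont.intervalIntegrable 0 k)]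
  have hG : ∀ τ ∈ uIcc 0 k, HasDerivAt (fun τ => exp ((k - τ) • A) (x + τ • A x))
      (-(τ • exp ((k - τ) • A)) (A (A x))) τ := by
    intro τ _
    refine (hasDerivAt_exp_sub_smul_apply A k
      (((hasDerivAt_id τ).smul_const (A x)).const_add x)).congr_deriv ?_
    simp [map_smul]
  rw [← neg_neg (∫ _ in _.._, _), ← intervalIntegral.integral_neg, integral_eq_sub_of_hasDerivAt hG
    ((hcont.neg.clm_apply continuous_const).intervalIntegrable _ _)]
  simp only [sub_self, zero_smul, exp_zero, one_apply_eq_self, sub_zero,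
    add_zero, neg_sub]
  abel

theorem gronwallBound_le_mul_exp {δ K ε x : ℝ} (hK : 0 ≤ K) (hε : 0 ≤ ε) :
    gronwallBound δ K ε x ≤ (δ + ε * x) * Real.exp (K * x) := by
  rcases hK.eq_or_lt with rfl | hK
  · simp [gronwallBound_K0]
  have hexp : Real.exp (K * x) - 1 ≤ K * x * Real.exp (K * x) := by
    have := mul_le_mul_of_nonneg_right (Real.one_sub_le_exp_neg (K * x)) (Real.exp_pos (K * x)).le
    rw [← Real.exp_add, neg_add_cancel, Real.exp_zero] at this
    linarith
  rw [gronwallBound_of_K_ne_0 hK.ne']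
  calc δ * Real.exp (K * x) + ε / K * (Real.exp (K * x) - 1)
      ≤ δ * Real.exp (K * x) + ε / K * (K * x * Real.exp (K * x)) := by gcongr
    _ = (δ + ε * x) * Real.exp (K * x) := by field_simp

theorem exists_forall_mem_Ioo_hasDerivAt_of_lipschitzWith {f : ℝ → X → X}
    (hf : Continuous fun p : ℝ × X => f p.1 p.2) {K : ℝ≥0} (hK : ∀ t, LipschitzWith K (f t))
    {a b t₀ : ℝ} (ht₀ : t₀ ∈ Icc a b) (x₀ : X) {M : ℝ} (hM : ∀ t ∈ Icc a b, ‖f t x₀‖ ≤ M)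
    (hMab : (M + K) * (b - a) ≤ 1) :
    ∃ w : ℝ → X, w t₀ = x₀ ∧ ∀ t ∈ Ioo a b, HasDerivAt w (f t (w t)) t := by
  have hPL : IsPicardLindelof f ⟨t₀, ht₀⟩ x₀ 1 0 (M + K).toNNReal K := by
    refine ⟨fun t _ => (hK t).lipschitzOnWith, fun x _ => ?_, fun t ht x hx => ?_, ?_⟩
    · exact (hf.comp (continuous_id.prodMk continuous_const)).continuousOn
    · have hx1 : ‖x - x₀‖ ≤ 1 := by simpa [dist_eq_norm] using hx
      calc ‖f t x‖ ≤ ‖f t x₀‖ + ‖f t x - f t x₀‖ := norm_le_insert' _ _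
        _ ≤ M + K * 1 := by
            gcongr
            · exact hM t ht
            · exact ((hK t).norm_sub_le x x₀).trans (by gcongr)
        _ ≤ (M + K).toNNReal := by simp
    · have hMK : 0 ≤ M + K := add_nonneg ((norm_nonneg _).trans (hM t₀ ht₀)) K.2
      show (M + K).toNNReal * max (b - t₀) (t₀ - a) ≤ (1 : ℝ≥0) - (0 : ℝ≥0)
      rw [Real.coe_toNNReal _ hMK, NNReal.coe_one, NNReal.coe_zero, sub_zero]
      refine le_trans ?_ hMab
      gcongr
      exact max_le (by linarith [ht₀.1]) (by linarith [ht₀.2])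
  obtain ⟨w, hw0, hw⟩ := hPL.exists_eq_forall_mem_Icc_hasDerivWithinAt₀
  exact ⟨w, hw0, fun t ht =>
    (hw t (Ioo_subset_Icc_self ht)).hasDerivAt (Icc_mem_nhds ht.1 ht.2)⟩

theorem exists_forall_mem_Icc_hasDerivAt_of_lipschitzWith {f : ℝ → X → X}
    (hf : Continuous fun p : ℝ × X => f p.1 p.2) {K : ℝ≥0} (hK : ∀ t, LipschitzWith K (f t))
    (y : X) {R : ℝ} (hR : 0 ≤ R) :
    ∃ k₁ : ℝ, 0 < k₁ ∧ ∀ k ∈ Ioc 0 k₁, ∀ x₀ ∈ closedBall y R,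
      ∃ w : ℝ → X, w 0 = x₀ ∧ ∀ s ∈ Icc 0 k, HasDerivAt w (f s (w s)) s := by
  obtain ⟨M, hM⟩ := (isCompact_Icc (a := (-1 : ℝ)) (b := 2)).exists_bound_of_continuousOn
    (hf.comp (continuous_id.prodMk continuous_const)).continuousOn
  have hM0 : 0 ≤ M := (norm_nonneg _).trans (hM 0 ⟨by norm_num, by norm_num⟩)
  refine ⟨min 1 (1 / (3 * (M + K * R + K) + 1)), by positivity, fun k hk x₀ hx₀ => ?_⟩
  have hk1 : k ≤ 1 := hk.2.trans (min_le_left _ _)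
  have hkB : k * (3 * (M + K * R + K) + 1) ≤ 1 :=
    (le_div_iff₀ (by positivity)).1 (hk.2.trans (min_le_right _ _))
  have hbound : ∀ t ∈ Icc (-k) (2 * k), ‖f t x₀‖ ≤ M + K * R := fun t ht =>
    calc ‖f t x₀‖ ≤ ‖f t y‖ + ‖f t x₀ - f t y‖ := norm_le_insert' _ _
      _ ≤ M + K * R := add_le_add (hM t ⟨by linarith [ht.1], by linarith [ht.2]⟩)
          (((hK t).norm_sub_le _ _).trans (by gcongr; simpa [dist_eq_norm] using hx₀))
  obtain ⟨w, hw0, hw⟩ := exists_forall_mem_Ioo_hasDerivAt_of_lipschitzWith hf hK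
    (t₀ := 0) ⟨by linarith [hk.1], by linarith [hk.1]⟩ x₀ hbound (by nlinarith [hk.1])
  exact ⟨w, hw0, fun s hs => hw s ⟨by linarith [hs.1, hk.1], by linarith [hs.2, hk.1]⟩⟩

section Splitting

variable {A : X →L[ℝ] X} {g : ℝ → X → X} {K : ℝ≥0} {v w : ℝ → X} {k Mv Mg : ℝ}

theorem norm_splitting_flow_sub_le_mul_exp (hA : ∀ t : ℝ, 0 ≤ t → ‖exp (t • A)‖ ≤ 1)
    (hK : ∀ t, LipschitzWith K (g t)) (hk : 0 ≤ k)
    (hv : ∀ s ∈ Icc 0 k, HasDerivAt v (A (v s) + g s (v s)) s)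
    (hw : ∀ s ∈ Icc 0 k, HasDerivAt w (g s (w s)) s) (hw0 : w 0 = exp (k • A) (v 0))
    (hMv : ∀ s ∈ Icc 0 k, ‖A (v s)‖ ≤ Mv) :
    ∀ s ∈ Icc 0 k, ‖w s - v s‖ ≤ (k * ‖A (v 0)‖ + Mv * s) * Real.exp (K * s) := by
  intro s hs
  have hMv0 : 0 ≤ Mv := (norm_nonneg _).trans (hMv 0 ⟨le_rfl, hk⟩)
  have hgron := dist_le_of_approx_trajectories_ODE (v := g) (δ := k * ‖A (v 0)‖) (εf := 0)
    (εg := Mv) hK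
    (fun s hs => (hw s hs).continuousAt.continuousWithinAt)
    (fun s hs => (hw s (Ico_subset_Icc_self hs)).hasDerivWithinAt)
    (fun s _ => by simp)
    (fun s hs => (hv s hs).continuousAt.continuousWithinAt)
    (fun s hs => (hv s (Ico_subset_Icc_self hs)).hasDerivWithinAt)
    (fun s hs => by simpa [dist_eq_norm] using hMv s (Ico_subset_Icc_self hs))
    (by simpa [hw0, dist_eq_norm] using norm_exp_smul_apply_sub_le hA (v 0) hk) s hs
  rw [dist_eq_norm, zero_add, sub_zero] at hgron
  exact hgron.trans (gronwallBound_le_mul_exp K.2 hMv0)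

theorem norm_splitting_flow_sub_le (hA : ∀ t : ℝ, 0 ≤ t → ‖exp (t • A)‖ ≤ 1)
    (hK : ∀ t, LipschitzWith K (g t)) (hk : 0 ≤ k)
    (hv : ∀ s ∈ Icc 0 k, HasDerivAt v (A (v s) + g s (v s)) s)
    (hw : ∀ s ∈ Icc 0 k, HasDerivAt w (g s (w s)) s) (hw0 : w 0 = exp (k • A) (v 0))
    (hMv : ∀ s ∈ Icc 0 k, ‖A (v s)‖ ≤ Mv) (hMg : ∀ s ∈ Icc 0 k, ‖g s (v s)‖ ≤ Mg) :
    ‖w k - v k‖ ≤ (K * ((‖A (v 0)‖ + Mv) * Real.exp (K * k)) + ‖A‖ * Mg) * k ^ 2 := by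
  have hdist := norm_splitting_flow_sub_le_mul_exp hA hK hk hv hw hw0 hMv
  have hMv0 : 0 ≤ Mv := (norm_nonneg _).trans (hMv 0 ⟨le_rfl, hk⟩)
  have hderiv : ∀ s ∈ Icc 0 k, HasDerivWithinAt (fun s => w s - exp ((k - s) • A) (v s))
      (g s (w s) - exp ((k - s) • A) (g s (v s))) (Icc 0 k) s := by
    intro s hs
    have h := (hw s hs).sub (hasDerivAt_exp_sub_smul_apply A k (hv s hs))
    rw [add_sub_cancel_left] at h
    exact h.hasDerivWithinAt
  have hbound : ∀ s ∈ Ico 0 k, ‖g s (w s) - exp ((k - s) • A) (g s (v s))‖ ≤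
      (K * ((‖A (v 0)‖ + Mv) * Real.exp (K * k)) + ‖A‖ * Mg) * k := by
    intro s hs
    have hs' := Ico_subset_Icc_self hs
    calc ‖g s (w s) - exp ((k - s) • A) (g s (v s))‖
        ≤ ‖g s (w s) - g s (v s)‖ + ‖exp ((k - s) • A) (g s (v s)) - g s (v s)‖ := by
          rw [norm_sub_rev (exp ((k - s) • A) (g s (v s)))]
          exact norm_sub_le_norm_sub_add_norm_sub _ _ _
      _ ≤ K * ‖w s - v s‖ + (k - s) * (‖A‖ * Mg) := by
          gcongr
          · exact (hK s).norm_sub_le _ _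
          · refine (norm_exp_smul_apply_sub_le hA _ (by linarith [hs.2])).trans ?_
            gcongr
            · linarith [hs.2]
            · exact (A.le_opNorm _).trans (by gcongr; exact hMg s hs')
      _ ≤ K * ((k * ‖A (v 0)‖ + Mv * k) * Real.exp (K * k)) + k * (‖A‖ * Mg) := by
          gcongr
          · exact (hdist s hs').trans (by gcongr; exacts [hs'.2, hs'.2])
          · exact mul_nonneg (norm_nonneg A) ((norm_nonneg _).trans (hMg s hs'))
          · linarith [hs.1]
      _ = _ := by ring
  have := norm_image_sub_le_of_norm_deriv_le_segment' hderiv hbound k ⟨hk, le_rfl⟩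
  simpa [hw0, sq, mul_assoc] using this

theorem exists_splitting_flow_norm_sub_le (hA : ∀ t : ℝ, 0 ≤ t → ‖exp (t • A)‖ ≤ 1)
    {f : ℝ → X → X} {L : ℝ} (hf : Continuous fun p : ℝ × X => f p.1 p.2)
    (hLip : ∀ t x y, ‖f t x - f t y‖ ≤ L * ‖x - y‖) {u : ℝ → X} {T tn : ℝ}
    (hode : ∀ t ∈ Icc 0 T, HasDerivAt u (A (u t) + f t (u t)) t) (htn : tn ∈ Icc 0 T) :
    ∃ C k₁ : ℝ, 0 < k₁ ∧ ∀ k ∈ Ioc 0 k₁, tn + k ≤ T → ∃ w : ℝ → X,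
      w 0 = exp (k • A) (u tn) ∧ (∀ s ∈ Icc 0 k, HasDerivAt w (f (tn + s) (w s)) s) ∧
      ‖w k - u (tn + k)‖ ≤ C * k ^ 2 := by
  set K := L.toNNReal
  have hK : ∀ t, LipschitzWith K (f (tn + t)) := fun t =>
    LipschitzWith.of_dist_le' (by simpa only [dist_eq_norm] using hLip (tn + t))
  have hu : ContinuousOn u (Icc 0 T) := fun t ht => (hode t ht).continuousAt.continuousWithinAt
  obtain ⟨Mu, hMu⟩ :=
    isCompact_Icc.exists_bound_of_continuousOn (A.continuous.comp_continuousOn hu)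
  obtain ⟨Mf, hMf⟩ := isCompact_Icc.exists_bound_of_continuousOn
    (hf.comp_continuousOn (continuousOn_id.prodMk hu))
  have hMu0 : 0 ≤ Mu := (norm_nonneg _).trans (hMu tn htn)
  obtain ⟨kE, hkE, hflow⟩ := exists_forall_mem_Icc_hasDerivAt_of_lipschitzWith
    (f := fun t => f (tn + t)) (hf.comp ((continuous_const.add continuous_fst).prodMk
      continuous_snd)) hK (u tn) (norm_nonneg (A (u tn)))
  refine ⟨K * ((‖A (u tn)‖ + Mu) * Real.exp K) + ‖A‖ * Mf, min kE 1, lt_min hkE one_pos,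
    fun k ⟨hk, hkk₁⟩ hkT => ?_⟩
  have hk1 : k ≤ 1 := hkk₁.trans (min_le_right _ _)
  have hx₀ : exp (k • A) (u tn) ∈ closedBall (u tn) ‖A (u tn)‖ := by
    rw [mem_closedBall, dist_eq_norm]
    exact (norm_exp_smul_apply_sub_le hA _ hk.le).trans (mul_le_of_le_one_left (norm_nonneg _) hk1)
  obtain ⟨w, hw0, hw⟩ := hflow k ⟨hk, hkk₁.trans (min_le_left _ _)⟩ _ hx₀
  have hmem : ∀ s ∈ Icc 0 k, tn + s ∈ Icc 0 T := fun s hs =>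
    ⟨by linarith [hs.1, htn.1], by linarith [hs.2]⟩
  have hv : ∀ s ∈ Icc 0 k, HasDerivAt (fun s => u (tn + s))
      (A (u (tn + s)) + f (tn + s) (u (tn + s))) s := fun s hs =>
    (hode _ (hmem s hs)).comp_const_add tn s
  have hsplit := norm_splitting_flow_sub_le hA hK hk.le hv hw (by simpa using hw0)
    (fun s hs => hMu _ (hmem s hs)) (fun s hs => hMf _ (hmem s hs))
  simp only [add_zero] at hsplit
  refine ⟨w, hw0, hw, hsplit.trans ?_⟩
  gcongr
  nlinarith

end Splitting

end

theorem stmt_12_general {X : Type*} [NormedAddCommGroup X] [NormedSpace ℝ X] [CompleteSpace X]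
    (A0 : X →L[ℝ] X)
    (hA : ∀ t : ℝ, 0 ≤ t → ‖NormedSpace.exp (t • A0)‖ ≤ 1)
    (T : ℝ)
    (f : ℝ → X → X) (L : ℝ)
    (hf : Continuous fun p : ℝ × X => f p.1 p.2)
    (hLip : ∀ t x y, ‖f t x - f t y‖ ≤ L * ‖x - y‖)
    (u : ℝ → X)
    (hode : ∀ t ∈ Set.Icc (0:ℝ) T, HasDerivAt u (A0 (u t) + f t (u t)) t)
    (p : ℕ) (hp : 1 ≤ p)
    (Ψ : ℝ → X → X) (tn : ℝ) (htn : tn ∈ Set.Ico (0:ℝ) T)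
    (hΨ : ∃ Cψ k0 : ℝ, 0 < k0 ∧ ∀ k ∈ Set.Ioc (0:ℝ) k0, ∀ v : X, ∀ w : ℝ → X,
      w 0 = v → (∀ s ∈ Set.Icc (0:ℝ) k, HasDerivAt w (f (tn + s) (w s)) s) →
      ‖Ψ k v - w k‖ ≤ Cψ * k ^ (p + 1)) :
    ∃ C k1 : ℝ, 0 < k1 ∧ ∀ k ∈ Set.Ioc (0:ℝ) k1, tn + k ≤ T →
      ‖Ψ k (u tn + k • A0 (u tn) +
          (∫ τ in (0:ℝ)..k, τ • NormedSpace.exp ((k - τ) • A0)) (A0 (A0 (u tn)))) -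
        u (tn + k)‖ ≤ C * k ^ 2 := by
  obtain ⟨Cψ, k0, hk0, hΨ⟩ := hΨ
  obtain ⟨C, kS, hkS, hsplit⟩ :=
    exists_splitting_flow_norm_sub_le hA hf hLip hode (Ico_subset_Icc_self htn)
  refine ⟨max Cψ 0 + C, min k0 (min kS 1), lt_min hk0 (lt_min hkS one_pos), ?_⟩
  rintro k ⟨hk, hkk₁⟩ hkT
  have hk1 : k ≤ 1 := hkk₁.trans ((min_le_right _ _).trans (min_le_right _ _))
  obtain ⟨w, hw0, hw, hwu⟩ :=
    hsplit k ⟨hk, hkk₁.trans ((min_le_right _ _).trans (min_le_left _ _))⟩ hkT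
  rw [intervalIntegral_smul_exp_apply_sq, add_add_sub_cancel, add_sub_cancel]
  calc ‖Ψ k (exp (k • A0) (u tn)) - u (tn + k)‖
      ≤ ‖Ψ k (exp (k • A0) (u tn)) - w k‖ + ‖w k - u (tn + k)‖ :=
        norm_sub_le_norm_sub_add_norm_sub _ _ _
    _ ≤ max Cψ 0 * k ^ (p + 1) + C * k ^ 2 := by
        gcongr
        exact (hΨ k ⟨hk, hkk₁.trans (min_le_left _ _)⟩ _ w hw0 hw).trans
          (by gcongr; exact le_max_left _ _)
    _ ≤ max Cψ 0 * k ^ 2 + C * k ^ 2 := by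
        gcongr ?_ + _
        exact mul_le_mul_of_nonneg_left (pow_le_pow_of_le_one hk.le hk1 (by omega))
          (le_max_right _ _)
    _ = (max Cψ 0 + C) * k ^ 2 := (add_mul _ _ _).symm

/-- Bounded-operator version of the local error bound `O(k²)` for the modified Lie-Trotter
time semidiscretization. -/
theorem stmt_12 {X : Type*} [NormedAddCommGroup X] [NormedSpace ℝ X] [CompleteSpace X]
    (A0 : X →L[ℝ] X)
    (hA : ∀ t : ℝ, 0 ≤ t → ‖NormedSpace.exp (t • A0)‖ ≤ 1)
    (T : ℝ) (hT : 0 < T)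
    (f : ℝ → X → X) (L : ℝ)
    (hf : Continuous fun p : ℝ × X => f p.1 p.2)
    (hLip : ∀ t x y, ‖f t x - f t y‖ ≤ L * ‖x - y‖)
    (u : ℝ → X) (hu2 : ContDiff ℝ 2 u)
    (hode : ∀ t ∈ Set.Icc (0:ℝ) T, HasDerivAt u (A0 (u t) + f t (u t)) t)
    (p : ℕ) (hp : 1 ≤ p)
    (Ψ : ℝ → X → X) (tn : ℝ) (htn : tn ∈ Set.Ico (0:ℝ) T)
    (hΨ : ∃ Cψ k0 : ℝ, 0 < k0 ∧ ∀ k ∈ Set.Ioc (0:ℝ) k0, ∀ v : X, ∀ w : ℝ → X,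
      w 0 = v → (∀ s ∈ Set.Icc (0:ℝ) k, HasDerivAt w (f (tn + s) (w s)) s) →
      ‖Ψ k v - w k‖ ≤ Cψ * k ^ (p + 1)) :
    ∃ C k1 : ℝ, 0 < k1 ∧ ∀ k ∈ Set.Ioc (0:ℝ) k1, tn + k ≤ T →
      ‖Ψ k (u tn + k • A0 (u tn) +
          (∫ τ in (0:ℝ)..k, τ • NormedSpace.exp ((k - τ) • A0)) (A0 (A0 (u tn)))) -
        u (tn + k)‖ ≤ C * k ^ 2 :=
  stmt_12_general A0 hA T f L hf hLip u hode p hp Ψ tn htn hΨ
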